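/- arXiv:1802.07223 — 2 statements merged into one kernel-verified Lean document; each statement's English description precedes it below -/
import Mathlib

section
/- Let α ∈ (0,1), ρ ∈ (0,1) with αρ, αρ̂ ∈ (0,1), ρ̂ = 1−ρ. For every x > 1: ∫₁^x (x+z)(2z)^{−α}(x−z)^{αρ̂−1}(x+z)^{αρ−1} dz + ∫_{−x}^{−1} (x+z)(−2z)^{−α}(x+z)^{αρ̂−1}(x−z)^{αρ−1} dz = 2^{1−α} ∫₁^x (u−1)^{αρ̂−1}(u+1)^{αρ−1} du. -/
open MeasureTheory Real Set

/-! Reflecting the second integral by `z ↦ -z` and adding it to the first replaces the factor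
`x + z` by `2x`. On `[1, x]` the inversion `z = x / u` then factors out all powers of `x`, since
the exponents `-α`, `αρ̂ - 1`, `αρ - 1` sum to `-2` and cancel the Jacobian `x / u²`. -/

theorem intervalIntegral.integral_comp_inversion {a b : ℝ} (ha : 0 < a) (hab : a ≤ b)
    (g : ℝ → ℝ) :
    ∫ u in a..b, a * b / u ^ 2 * g (a * b / u) = ∫ z in a..b, g z := by
  have hb : 0 < b := ha.trans_le hab
  have hpos : ∀ u ∈ Icc a b, 0 < u := fun u hu => ha.trans_le hu.1
  have hmaps : MapsTo (fun u => a * b / u) (Icc a b) (Icc a b) := by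
    intro u hu
    have := hpos u hu
    constructor
    · rw [le_div_iff₀ this]; nlinarith [hu.2]
    · rw [div_le_iff₀ this]; nlinarith [hu.1]
  have himage : (fun u => a * b / u) '' Icc a b = Icc a b := by
    refine hmaps.image_subset.antisymm fun z hz => ⟨a * b / z, hmaps hz, ?_⟩
    have := hpos z hz
    field_simp
  have hderiv : ∀ u ∈ Icc a b,
      HasDerivWithinAt (fun u => a * b / u) (-(a * b) / u ^ 2) (Icc a b) u := by
    intro u hu
    have := ((hasDerivAt_inv (hpos u hu).ne').const_mul (a * b)).hasDerivWithinAt (s := Icc a b)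
    simpa [div_eq_mul_inv, neg_div] using this
  have hinj : InjOn (fun u => a * b / u) (Icc a b) := by
    intro u hu v hv h
    have := hpos u hu
    have := hpos v hv
    field_simp at h
    nlinarith
  rw [intervalIntegral.integral_of_le hab, intervalIntegral.integral_of_le hab,
    ← integral_Icc_eq_integral_Ioc, ← integral_Icc_eq_integral_Ioc]
  conv_rhs =>
    rw [← himage, integral_image_eq_integral_abs_deriv_smul measurableSet_Icc hderiv hinj]
  refine setIntegral_congr_fun measurableSet_Icc fun u hu => ?_
  have := hpos u hu
  rw [smul_eq_mul, abs_div, abs_neg, abs_of_pos (by positivity : 0 < a * b),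
    abs_of_pos (by positivity : 0 < u ^ 2)]

theorem ContinuousOn.intervalIntegrable_mul_rpow_sub {a b r : ℝ} {c : ℝ → ℝ}
    (hc : ContinuousOn c (uIcc a b)) (hr : -1 < r) :
    IntervalIntegrable (fun z => c z * (b - z) ^ r) volume a b := by
  have h := (intervalIntegral.intervalIntegrable_rpow' (a := b - a) (b := 0) hr).comp_sub_left b
  simp only [sub_sub_cancel, sub_zero] at h
  exact h.continuousOn_mul hc

theorem rpow_kernel_at_div_eq {α A B x u : ℝ} (hx : 0 < x) (hu : 1 ≤ u)
    (hAB : A + B = α - 2) :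
    x / u ^ 2 * (2 * x * ((2 * (x / u)) ^ (-α) * (x - x / u) ^ A * (x + x / u) ^ B))
      = 2 ^ (1 - α) * ((u - 1) ^ A * (u + 1) ^ B) := by
  have hu0 : 0 < u := by linarith
  set w := x / u with hw
  have hw0 : 0 < w := by positivity
  have hsub : x - w = w * (u - 1) := by rw [hw]; field_simp
  have hadd : x + w = w * (u + 1) := by rw [hw]; field_simp
  have hpow : w ^ (-α) * w ^ A * w ^ B = (w ^ 2)⁻¹ := by
    rw [← rpow_add hw0, ← rpow_add hw0, show -α + A + B = -(2 : ℕ) by push_cast; linarith,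
      rpow_neg hw0.le, rpow_natCast]
  have htwo : (2 : ℝ) ^ (1 - α) = 2 * 2 ^ (-α) := by
    rw [sub_eq_neg_add, rpow_add two_pos, rpow_one, mul_comm]
  rw [hsub, hadd, mul_comm 2 w, mul_rpow hw0.le two_pos.le, mul_rpow hw0.le (by linarith),
    mul_rpow hw0.le (by linarith), htwo]
  calc _ = x / u ^ 2 * (2 * x) * (w ^ (-α) * w ^ A * w ^ B)
        * (2 ^ (-α) * (u - 1) ^ A * (u + 1) ^ B) := by ring
    _ = _ := by rw [hpow, hw]; field_simp

theorem stmt_3_general (α ρ : ℝ)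
    (hαρ' : α * (1 - ρ) ∈ Set.Ioo (0:ℝ) 1)
    (x : ℝ) (hx : 1 < x) :
    (∫ z in (1:ℝ)..x,
        (x + z) * (2 * z) ^ (-α) * (x - z) ^ (α * (1 - ρ) - 1) * (x + z) ^ (α * ρ - 1))
      + (∫ z in (-x)..(-1:ℝ),
        (x + z) * (-(2 * z)) ^ (-α) * (x + z) ^ (α * (1 - ρ) - 1) * (x - z) ^ (α * ρ - 1))
      = 2 ^ ((1:ℝ) - α) *
        ∫ u in (1:ℝ)..x, (u - 1) ^ (α * (1 - ρ) - 1) * (u + 1) ^ (α * ρ - 1) := by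
  set A := α * (1 - ρ) - 1
  set B := α * ρ - 1
  set c : ℝ → ℝ := fun z => (2 * z) ^ (-α) * (x + z) ^ B
  have hc : ContinuousOn c (uIcc 1 x) := by
    refine ContinuousOn.mul ?_ ?_ <;> refine ContinuousOn.rpow_const (by fun_prop) fun z hz => ?_
    all_goals
      have : 1 ≤ z := (uIcc_of_le hx.le ▸ hz).1
      left; positivity
  have hA : -1 < A := by linarith [hαρ'.1]
  have hreflect : ∫ z in (-x)..(-1:ℝ), (x + z) * (-(2 * z)) ^ (-α) * (x + z) ^ A * (x - z) ^ B
      = ∫ z in (1:ℝ)..x, (x - z) * c z * (x - z) ^ A := by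
    rw [← intervalIntegral.integral_comp_neg]
    refine intervalIntegral.integral_congr fun z _ => ?_
    simp only [c, neg_neg, mul_neg, ← sub_eq_add_neg, sub_neg_eq_add]
    ring
  have hsum : (∫ z in (1:ℝ)..x, (x + z) * (2 * z) ^ (-α) * (x - z) ^ A * (x + z) ^ B)
      + ∫ z in (1:ℝ)..x, (x - z) * c z * (x - z) ^ A
      = ∫ z in (1:ℝ)..x, 2 * x * ((2 * z) ^ (-α) * (x - z) ^ A * (x + z) ^ B) := by
    rw [← intervalIntegral.integral_add]
    · exact intervalIntegral.integral_congr fun z _ => by simp only [c]; ring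
    · exact (ContinuousOn.mul (f := fun z => x + z) (by fun_prop) hc)
        |>.intervalIntegrable_mul_rpow_sub hA
        |>.congr fun z _ => by simp only [c, Pi.mul_apply]; ring
    · exact (ContinuousOn.mul (f := fun z => x - z) (by fun_prop) hc)
        |>.intervalIntegrable_mul_rpow_sub hA
  rw [hreflect, hsum, ← intervalIntegral.integral_const_mul,
    ← intervalIntegral.integral_comp_inversion one_pos hx.le, one_mul]
  refine intervalIntegral.integral_congr fun u hu => ?_
  exact rpow_kernel_at_div_eq (by linarith) (uIcc_of_le hx.le ▸ hu).1 (by ring)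

theorem stmt_3 (α ρ : ℝ) (hα : α ∈ Set.Ioo (0:ℝ) 1) (hρ : ρ ∈ Set.Ioo (0:ℝ) 1)
    (hαρ : α * ρ ∈ Set.Ioo (0:ℝ) 1) (hαρ' : α * (1 - ρ) ∈ Set.Ioo (0:ℝ) 1)
    (x : ℝ) (hx : 1 < x) :
    (∫ z in (1:ℝ)..x,
        (x + z) * (2 * z) ^ (-α) * (x - z) ^ (α * (1 - ρ) - 1) * (x + z) ^ (α * ρ - 1))
      + (∫ z in (-x)..(-1:ℝ),
        (x + z) * (-(2 * z)) ^ (-α) * (x + z) ^ (α * (1 - ρ) - 1) * (x - z) ^ (α * ρ - 1))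
      = 2 ^ ((1:ℝ) - α) *
        ∫ u in (1:ℝ)..x, (u - 1) ^ (α * (1 - ρ) - 1) * (u + 1) ^ (α * ρ - 1) :=
  stmt_3_general α ρ hαρ' x hx
end

section
/- Let α ∈ (1,2), ρ̂ = 1−ρ with αρ, αρ̂ ∈ (0,1), ψ_{αρ}(z) = (z−1)^{αρ̂−1}(z+1)^{αρ−1}, ψ_{αρ̂}(z) = (z−1)^{αρ−1}(z+1)^{αρ̂−1}, z(x,y) = (xy−1)/(y−x), and for 1 < x < y define u(x,y) = (y−x)^{α−1}( ∫₁^{z(x,y)} ψ_{αρ}(v) dv − (α−1)(y−x)^{1−α} ∫₁^y ψ_{αρ̂}(v) dv · ∫₁^x ψ_{αρ}(v) dv ). Then for every fixed x > 1: lim_{y→∞} u(x,y) = 2(1−αρ̂) (∫₁^∞ ψ_{αρ̂}(v)/(v+1) dv) · ∫₁^x ψ_{αρ}(v) dv. -/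
/-!
Put `b = αρ`, `b' = αρ̂`, so that `b + b' = α`. Differentiating `(v - 1)^b (v + 1)^(b'-1)` and
writing `v - 1 = (v + 1) - 2` gives
`(α - 1) ∫₁^y ψ_{αρ̂} = (y - 1)^b (y + 1)^(b'-1) - 2(1 - b') ∫₁^y ψ_{αρ̂}(v) / (v + 1) dv`.
Together with `∫₁^z = ∫₁^x + ∫ₓ^z` this splits `u(x, y)` into three terms:
* `(y - x)^(α-1) ∫ₓ^z ψ_{αρ}`, which vanishes because `z - x = (x² - 1)/(y - x)` and `α < 2`;
* `((y - x)^(α-1) - (y - 1)^b (y + 1)^(b'-1)) ∫₁^x ψ_{αρ}`, which vanishes because the bracket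
  is `y^(α-1) F(1/y)` with `F` differentiable at `0` and `F 0 = 0`;
* `2(1 - b') ∫₁^y ψ_{αρ̂}(v) / (v + 1) dv · ∫₁^x ψ_{αρ}`, which converges to the limit.
-/

open MeasureTheory Real Filter Set Topology

noncomputable def powWeight (p q v : ℝ) : ℝ := (v - 1) ^ p * (v + 1) ^ q

lemma continuousOn_powWeight (p q : ℝ) {s : Set ℝ} (hs : s ⊆ Ioi 1) :
    ContinuousOn (powWeight p q) s := by
  refine ContinuousOn.mul (ContinuousOn.rpow_const (by fun_prop) fun v hv => Or.inl ?_)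
    (ContinuousOn.rpow_const (by fun_prop) fun v hv => Or.inl ?_) <;>
  · have : 1 < v := hs hv
    linarith

lemma intervalIntegrable_powWeight {p : ℝ} (q : ℝ) (hp : -1 < p) {y : ℝ} (hy : 1 ≤ y) :
    IntervalIntegrable (powWeight p q) volume 1 y := by
  have hsing : IntervalIntegrable (fun v : ℝ => (v - 1) ^ p) volume 1 y := by
    simpa using
      (intervalIntegral.intervalIntegrable_rpow' (a := 0) (b := y - 1) hp).comp_sub_right 1
  refine hsing.mul_continuousOn (ContinuousOn.rpow_const (by fun_prop) fun v hv => ?_)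
  rw [uIcc_of_le hy] at hv
  exact Or.inl (by linarith [hv.1])

lemma powWeight_div_add_one (p q : ℝ) {v : ℝ} (hv : -1 < v) :
    powWeight p q v / (v + 1) = powWeight p (q - 1) v := by
  rw [powWeight, powWeight, rpow_sub (by linarith), rpow_one, mul_div_assoc]

lemma hasDerivAt_powWeight (b c : ℝ) {v : ℝ} (hv : 1 < v) :
    HasDerivAt (powWeight b c)
      ((b + c) * powWeight (b - 1) c v - 2 * c * powWeight (b - 1) (c - 1) v) v := by
  have hv₁ : v - 1 ≠ 0 := by linarith
  have hv₂ : 0 < v + 1 := by linarith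
  have h := (((hasDerivAt_id v).sub_const 1).rpow_const (p := b) (Or.inl hv₁)).mul
    (((hasDerivAt_id v).add_const 1).rpow_const (p := c) (Or.inl hv₂.ne'))
  refine HasDerivAt.congr_deriv (f := powWeight b c) h ?_
  simp only [powWeight, id, rpow_sub hv₂, rpow_one]
  rw [show (v - 1) ^ b = (v - 1) ^ (b - 1) * (v - 1) by rw [← rpow_add_one hv₁]; ring_nf]
  field_simp
  ring

lemma integral_powWeight_eq {b : ℝ} (c : ℝ) (hb : 0 < b) {y : ℝ} (hy : 1 ≤ y) :
    (b + c) * ∫ v in (1:ℝ)..y, powWeight (b - 1) c v =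
      powWeight b c y + 2 * c * ∫ v in (1:ℝ)..y, powWeight (b - 1) (c - 1) v := by
  have hint₁ := intervalIntegrable_powWeight c (show -1 < b - 1 by linarith) hy
  have hint₂ := intervalIntegrable_powWeight (c - 1) (show -1 < b - 1 by linarith) hy
  have hcont : ContinuousOn (powWeight b c) (Icc 1 y) :=
    ContinuousOn.mul (ContinuousOn.rpow_const (by fun_prop) fun _ _ => Or.inr hb.le)
      (ContinuousOn.rpow_const (by fun_prop) fun v hv => Or.inl (by linarith [hv.1]))
  have hftc := intervalIntegral.integral_eq_sub_of_hasDerivAt_of_le hy hcont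
    (fun v hv => hasDerivAt_powWeight b c hv.1)
    ((hint₁.const_mul (b + c)).sub (hint₂.const_mul (2 * c)))
  rw [intervalIntegral.integral_sub (hint₁.const_mul _) (hint₂.const_mul _),
    intervalIntegral.integral_const_mul, intervalIntegral.integral_const_mul] at hftc
  have hzero : powWeight b c 1 = 0 := by simp [powWeight, zero_rpow hb.ne']
  rw [hzero, sub_zero] at hftc
  linarith

lemma powWeight_le_rpow {p q v : ℝ} (hp : p ≤ 0) (hq : q ≤ 0) (hv : 2 ≤ v) :
    powWeight p q v ≤ v ^ q :=
  calc powWeight p q v ≤ 1 * v ^ q := by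
        refine mul_le_mul ?_ (rpow_le_rpow_of_nonpos (by linarith) (by linarith) hq)
          (by positivity) zero_le_one
        exact rpow_le_one_of_one_le_of_nonpos (by linarith) hp
    _ = v ^ q := one_mul _

lemma integrableOn_Ioi_powWeight {p q : ℝ} (hp : -1 < p) (hp₀ : p ≤ 0) (hq : q < -1) :
    IntegrableOn (powWeight p q) (Ioi 1) := by
  rw [← Ioc_union_Ioi_eq_Ioi one_le_two]
  refine IntegrableOn.union ?_ ?_
  · exact (intervalIntegrable_iff_integrableOn_Ioc_of_le one_le_two).mp
      (intervalIntegrable_powWeight q hp one_le_two)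
  · refine (integrableOn_Ioi_rpow_of_lt hq two_pos).mono'
      ((continuousOn_powWeight p q fun v (hv : 2 < v) => by
        simp only [mem_Ioi]; linarith).aestronglyMeasurable measurableSet_Ioi) ?_
    refine (ae_restrict_iff' measurableSet_Ioi).mpr (ae_of_all _ fun v (hv : 2 < v) => ?_)
    have hnonneg : 0 ≤ powWeight p q v :=
      mul_nonneg (rpow_nonneg (by linarith) _) (rpow_nonneg (by linarith) _)
    rw [norm_of_nonneg hnonneg]
    exact powWeight_le_rpow hp₀ (by linarith) hv.le

lemma tendsto_rpow_mul_comp_inv_atTop {F : ℝ → ℝ} {d s : ℝ} (hF : HasDerivAt F d 0)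
    (hF₀ : F 0 = 0) (hs : s < 1) :
    Tendsto (fun y => y ^ s * F y⁻¹) atTop (𝓝 0) := by
  have hslope : Tendsto (fun y : ℝ => F y⁻¹ / y⁻¹) atTop (𝓝 d) := by
    have h := (hasDerivAt_iff_tendsto_slope.mp hF).comp
      (tendsto_inv_atTop_nhdsGT_zero.mono_right (nhdsWithin_mono 0 fun t ht => ne_of_gt ht))
    refine h.congr fun y => ?_
    simp [slope_def_field, hF₀]
  have hpow : Tendsto (fun y : ℝ => y ^ (s - 1)) atTop (𝓝 0) := by
    simpa using tendsto_rpow_neg_atTop (show 0 < 1 - s by linarith)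
  refine (zero_mul d ▸ hpow.mul hslope).congr' ?_
  filter_upwards [eventually_gt_atTop 0] with y hy
  rw [div_inv_eq_mul, rpow_sub_one hy.ne']
  field_simp

lemma tendsto_rpow_sub_sub_powWeight (x : ℝ) {b c s : ℝ} (hbc : b + c = s) (hs : s < 1) :
    Tendsto (fun y => (y - x) ^ s - powWeight b c y) atTop (𝓝 0) := by
  obtain ⟨d, hF⟩ :
      ∃ d, HasDerivAt (fun t : ℝ => (1 - x * t) ^ s - (1 - t) ^ b * (1 + t) ^ c) d 0 :=
    ⟨_, .sub ((((hasDerivAt_id 0).const_mul x).const_sub 1).rpow_const (Or.inl (by simp)))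
      ((((hasDerivAt_id 0).const_sub 1).rpow_const (Or.inl (by simp))).mul
        (((hasDerivAt_id 0).const_add 1).rpow_const (Or.inl (by simp))))⟩
  refine (tendsto_rpow_mul_comp_inv_atTop hF (by simp) hs).congr' ?_
  filter_upwards [eventually_gt_atTop (max x 1)] with y hy
  have hxy : x < y := (le_max_left _ _).trans_lt hy
  have hy₁ : 1 < y := (le_max_right _ _).trans_lt hy
  have hy₀ : 0 < y := by linarith
  have h₁ : y ^ s * (1 - x * y⁻¹) ^ s = (y - x) ^ s := by
    rw [← mul_rpow hy₀.le]
    · congr 1; field_simp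
    · rw [sub_nonneg, ← div_eq_mul_inv, div_le_one hy₀]; exact hxy.le
  have h₂ : y ^ s * ((1 - y⁻¹) ^ b * (1 + y⁻¹) ^ c) = powWeight b c y := by
    rw [← hbc, rpow_add hy₀, mul_mul_mul_comm, ← mul_rpow hy₀.le, ← mul_rpow hy₀.le]
    · unfold powWeight; congr 2 <;> field_simp
    · positivity
    · rw [sub_nonneg]; exact inv_le_one_of_one_le₀ hy₁.le
  rw [mul_sub, h₁, h₂]

lemma mul_sub_one_div_sub_sub_self {x y : ℝ} (h : x < y) :
    (x * y - 1) / (y - x) - x = (x ^ 2 - 1) / (y - x) := by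
  field_simp [(sub_pos.mpr h).ne']
  ring

lemma self_le_mul_sub_one_div_sub {x y : ℝ} (hx : 1 ≤ x) (h : x < y) :
    x ≤ (x * y - 1) / (y - x) := by
  have hz := mul_sub_one_div_sub_sub_self h
  have hpos : 0 ≤ (x ^ 2 - 1) / (y - x) := div_nonneg (by nlinarith) (sub_pos.mpr h).le
  linarith

lemma tendsto_rpow_mul_integral_to_mul_sub_one_div_sub {f : ℝ → ℝ} {x s : ℝ} (hx : 1 ≤ x)
    (hf : ContinuousOn f (Icc x (x + 1))) (hs : s < 1) :
    Tendsto (fun y => (y - x) ^ s * ∫ v in x..(x * y - 1) / (y - x), f v) atTop (𝓝 0) := by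
  obtain ⟨M, hM⟩ := isCompact_Icc.exists_bound_of_continuousOn hf
  have hbound : Tendsto (fun y => M * (x ^ 2 - 1) * (y - x) ^ (s - 1)) atTop (𝓝 0) := by
    have := (tendsto_rpow_neg_atTop (show 0 < 1 - s by linarith)).comp
      (tendsto_atTop_add_const_right atTop (-x) tendsto_id)
    simpa [← sub_eq_add_neg] using this.const_mul (M * (x ^ 2 - 1))
  refine squeeze_zero_norm' ?_ hbound
  filter_upwards [eventually_ge_atTop (x * x + x)] with y hy
  have hxy : 0 < y - x := by nlinarith
  have hz : (x * y - 1) / (y - x) - x = (x ^ 2 - 1) / (y - x) :=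
    mul_sub_one_div_sub_sub_self (by linarith)
  have hxz := self_le_mul_sub_one_div_sub hx (show x < y by linarith)
  have hz₁ : (x * y - 1) / (y - x) ≤ x + 1 := by
    have : (x ^ 2 - 1) / (y - x) ≤ 1 := by rw [div_le_one hxy]; nlinarith
    linarith
  have hint : ‖∫ v in x..(x * y - 1) / (y - x), f v‖ ≤ M * |(x * y - 1) / (y - x) - x| :=
    intervalIntegral.norm_integral_le_of_norm_le_const fun v hv => by
      rw [uIoc_of_le hxz] at hv
      exact hM v ⟨hv.1.le, hv.2.trans hz₁⟩
  calc ‖(y - x) ^ s * ∫ v in x..(x * y - 1) / (y - x), f v‖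
      ≤ (y - x) ^ s * (M * |(x * y - 1) / (y - x) - x|) := by
        rw [norm_mul, norm_of_nonneg (rpow_nonneg hxy.le _)]
        exact mul_le_mul_of_nonneg_left hint (rpow_nonneg hxy.le _)
    _ = M * (x ^ 2 - 1) * (y - x) ^ (s - 1) := by
        rw [hz, abs_of_nonneg (div_nonneg (by nlinarith) hxy.le), rpow_sub_one hxy.ne']
        field_simp

lemma rpow_mul_integral_sub_eq {α b b' x y : ℝ} (hb : 0 < b) (hb' : 0 < b') (hbb' : b + b' = α)
    (hx : 1 < x) (hxy : x < y) :
    (y - x) ^ (α - 1) *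
        ((∫ v in (1:ℝ)..((x * y - 1) / (y - x)), powWeight (b' - 1) (b - 1) v)
          - (α - 1) * (y - x) ^ ((1:ℝ) - α) * (∫ v in (1:ℝ)..y, powWeight (b - 1) (b' - 1) v)
              * ∫ v in (1:ℝ)..x, powWeight (b' - 1) (b - 1) v) =
      (y - x) ^ (α - 1) * (∫ v in x..((x * y - 1) / (y - x)), powWeight (b' - 1) (b - 1) v)
        + ((y - x) ^ (α - 1) - powWeight b (b' - 1) y)
          * (∫ v in (1:ℝ)..x, powWeight (b' - 1) (b - 1) v)
        + 2 * (1 - b') * (∫ v in (1:ℝ)..y, powWeight (b - 1) (b' - 2) v)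
          * ∫ v in (1:ℝ)..x, powWeight (b' - 1) (b - 1) v := by
  have hxz := self_le_mul_sub_one_div_sub hx.le hxy
  rw [← intervalIntegral.integral_add_adjacent_intervals
    (intervalIntegrable_powWeight (b - 1) (by linarith) hx.le)
    (ContinuousOn.intervalIntegrable (continuousOn_powWeight _ _ fun v hv => by
      rw [uIcc_of_le hxz] at hv; exact hx.trans_le hv.1))]
  have hinv : (y - x) ^ (α - 1) * (y - x) ^ ((1:ℝ) - α) = 1 := by
    rw [← rpow_add (sub_pos.mpr hxy)]; norm_num
  have hftc := integral_powWeight_eq (b' - 1) hb (hx.trans hxy).le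
  rw [show b + (b' - 1) = α - 1 by linarith, show b' - 1 - 1 = b' - 2 by ring] at hftc
  linear_combination
    (-((α - 1) * (∫ v in (1:ℝ)..y, powWeight (b - 1) (b' - 1) v)
      * ∫ v in (1:ℝ)..x, powWeight (b' - 1) (b - 1) v)) * hinv
    - (∫ v in (1:ℝ)..x, powWeight (b' - 1) (b - 1) v) * hftc

theorem stmt_12 (α ρ : ℝ) (hα : α ∈ Set.Ioo (1:ℝ) 2)
    (hαρ : α * ρ ∈ Set.Ioo (0:ℝ) 1) (hαρ' : α * (1 - ρ) ∈ Set.Ioo (0:ℝ) 1)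
    (ψ ψ' : ℝ → ℝ)
    (hψ : ∀ z, ψ z = (z - 1) ^ (α * (1 - ρ) - 1) * (z + 1) ^ (α * ρ - 1))
    (hψ' : ∀ z, ψ' z = (z - 1) ^ (α * ρ - 1) * (z + 1) ^ (α * (1 - ρ) - 1))
    (u : ℝ → ℝ → ℝ)
    (hu : ∀ x y : ℝ, 1 < x → x < y →
      u x y = (y - x) ^ (α - 1) *
        ((∫ v in (1:ℝ)..((x * y - 1) / (y - x)), ψ v)
          - (α - 1) * (y - x) ^ ((1:ℝ) - α) * (∫ v in (1:ℝ)..y, ψ' v)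
              * ∫ v in (1:ℝ)..x, ψ v))
    (x : ℝ) (hx : 1 < x) :
    Tendsto (fun y => u x y) atTop
      (nhds (2 * (1 - α * (1 - ρ)) * (∫ v in Set.Ioi (1:ℝ), ψ' v / (v + 1))
        * ∫ v in (1:ℝ)..x, ψ v)) := by
  obtain ⟨-, hα₂⟩ := hα
  obtain ⟨hb₀, hb₁⟩ := hαρ
  obtain ⟨hb'₀, hb'₁⟩ := hαρ'
  set b := α * ρ
  set b' := α * (1 - ρ)
  have hbb' : b + b' = α := by ring
  obtain rfl : ψ = powWeight (b' - 1) (b - 1) := funext hψ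
  obtain rfl : ψ' = powWeight (b - 1) (b' - 1) := funext hψ'
  have hJ : ∫ v in Ioi 1, powWeight (b - 1) (b' - 1) v / (v + 1) =
      ∫ v in Ioi 1, powWeight (b - 1) (b' - 2) v :=
    setIntegral_congr_fun measurableSet_Ioi fun v (hv : 1 < v) => by
      rw [powWeight_div_add_one _ _ (by linarith)]; ring_nf
  have hA := tendsto_rpow_mul_integral_to_mul_sub_one_div_sub hx.le
    (continuousOn_powWeight (b' - 1) (b - 1) fun v hv => hx.trans_le hv.1)
    (show α - 1 < 1 by linarith)
  have hD := tendsto_rpow_sub_sub_powWeight x (b := b) (c := b' - 1) (by linarith)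
    (show α - 1 < 1 by linarith)
  have hI := intervalIntegral_tendsto_integral_Ioi 1
    (integrableOn_Ioi_powWeight (p := b - 1) (q := b' - 2) (by linarith) (by linarith)
      (by linarith)) tendsto_id
  have hlim := hA.add ((hD.add (hI.const_mul (2 * (1 - b')))).mul_const
    (∫ v in (1:ℝ)..x, powWeight (b' - 1) (b - 1) v))
  rw [zero_add, zero_add, ← hJ] at hlim
  refine hlim.congr' ?_
  filter_upwards [eventually_gt_atTop x] with y hy
  rw [hu x y hx hy, rpow_mul_integral_sub_eq hb₀ hb'₀ hbb' hx hy, id]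
  ring
end
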